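/- Completeness of amendment (corrected Amendment Lemma): if the program (D,C) is well-formed and (D,C,s) --[tl]-->** (D,C',s'), then there exist transition label lists tl', tl'', a choreography C'' and state s'' such that sel_exp (tl ++ tl') tl'', (D,C',s') --[tl']-->** (D,C'',s''), and (amend_D D ps, amend D ps C, s) --[tl'']-->** (amend_D D ps, amend D ps C'', s''). -/

import Mathlib

namespace CC

abbrev Pid := ℕ
abbrev Var := ℕ
abbrev Val := ℕ
abbrev RecVar := ℕ

inductive Label | left | right
deriving Repr

inductive Expr | zero | var (x : Var) | succ (x : Var)
deriving Repr

inductive BExpr | eq (x y : Var)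
deriving Repr

/-- Behaviours of the process calculus SP. -/
inductive Behaviour
| send (p : Pid) (e : Expr) (B : Behaviour)
| recv (p : Pid) (x : Var) (B : Behaviour)
| sel (p : Pid) (l : Label) (B : Behaviour)
| branch (p : Pid) (mL mR : Option Behaviour)
| cond (b : BExpr) (B1 B2 : Behaviour)
| call (X : RecVar)
| nil
deriving Repr

mutual
/-- The merge relation on behaviours. -/
inductive Merge : Behaviour → Behaviour → Behaviour → Prop
| nil : Merge .nil .nil .nil
| call (X) : Merge (.call X) (.call X) (.call X)
| send {B1 B2 B p e} : Merge B1 B2 B → Merge (.send p e B1) (.send p e B2) (.send p e B)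
| recv {B1 B2 B p x} : Merge B1 B2 B → Merge (.recv p x B1) (.recv p x B2) (.recv p x B)
| sel {B1 B2 B p l} : Merge B1 B2 B → Merge (.sel p l B1) (.sel p l B2) (.sel p l B)
| cond {b Bt1 Bt2 Bt Be1 Be2 Be} : Merge Bt1 Bt2 Bt → Merge Be1 Be2 Be →
    Merge (.cond b Bt1 Be1) (.cond b Bt2 Be2) (.cond b Bt Be)
| branch {p mL1 mL2 mL mR1 mR2 mR} : MergeO mL1 mL2 mL → MergeO mR1 mR2 mR →
    Merge (.branch p mL1 mR1) (.branch p mL2 mR2) (.branch p mL mR)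

/-- Componentwise merge on optional behaviours. -/
inductive MergeO : Option Behaviour → Option Behaviour → Option Behaviour → Prop
| none : MergeO none none none
| someNone (B) : MergeO (some B) none (some B)
| noneSome (B) : MergeO none (some B) (some B)
| someSome {B1 B2 B} : Merge B1 B2 B → MergeO (some B1) (some B2) (some B)
end

/-- Interactions. -/
inductive Eta
| com (p : Pid) (e : Expr) (q : Pid) (x : Var)
| sel (p q : Pid) (l : Label)
deriving Repr

/-- Choreographies of Core Choreographies. -/
inductive Chor
| seq (η : Eta) (C : Chor)
| cond (p : Pid) (b : BExpr) (C1 C2 : Chor)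
| call (X : RecVar)
| nil
deriving Repr

/-- Sets of procedure definitions. -/
abbrev DefSet := RecVar → List Pid × Chor

def procsEta : Eta → Finset Pid
| .com p _ q _ => {p, q}
| .sel p q _ => {p, q}

/-- The set of processes occurring in a choreography. -/
def procsC : Chor → Finset Pid
| .seq η C => procsEta η ∪ procsC C
| .cond p _ C1 C2 => insert p (procsC C1 ∪ procsC C2)
| .call _ => ∅
| .nil => ∅

def etaWF : Eta → Prop
| .com p _ q _ => p ≠ q
| .sel p q _ => p ≠ q

/-- Well-formed choreographies: no self-communications. -/
def Chor_WF : Chor → Prop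
| .seq η C => etaWF η ∧ Chor_WF C
| .cond _ _ C1 C2 => Chor_WF C1 ∧ Chor_WF C2
| .call _ => True
| .nil => True

/-- Well-formed choreographic programs. -/
def Program_WF (D : DefSet) (C : Chor) : Prop :=
  Chor_WF C ∧ ∀ X, Chor_WF (D X).2

/-- Behaviour projection. -/
inductive BProj (D : DefSet) : Chor → Pid → Behaviour → Prop
| send {p e q x C B} : BProj D C p B → BProj D (.seq (.com p e q x) C) p (.send q e B)
| recv {p e q x C B} : p ≠ q → BProj D C q B → BProj D (.seq (.com p e q x) C) q (.recv p x B)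
| com {p e q x C r B} : p ≠ r → q ≠ r → BProj D C r B → BProj D (.seq (.com p e q x) C) r B
| pick {p q l C B} : BProj D C p B → BProj D (.seq (.sel p q l) C) p (.sel q l B)
| left {p q C B} : p ≠ q → BProj D C q B →
    BProj D (.seq (.sel p q .left) C) q (.branch p (some B) none)
| right {p q C B} : p ≠ q → BProj D C q B →
    BProj D (.seq (.sel p q .right) C) q (.branch p none (some B))
| selSkip {p q l C r B} : p ≠ r → q ≠ r → BProj D C r B → BProj D (.seq (.sel p q l) C) r B
| condEval {p b C1 C2 B1 B2} : BProj D C1 p B1 → BProj D C2 p B2 →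
    BProj D (.cond p b C1 C2) p (.cond b B1 B2)
| condMerge {p b C1 C2 r B1 B2 B} : p ≠ r → BProj D C1 r B1 → BProj D C2 r B2 →
    Merge B1 B2 B → BProj D (.cond p b C1 C2) r B
| callIn {X r} : r ∈ (D X).1 → BProj D (.call X) r (.call X)
| callOut {X r} : r ∉ (D X).1 → BProj D (.call X) r .nil
| nil {r} : BProj D .nil r .nil

/-- Projectability of a choreography on a process. -/
def projectable_B (D : DefSet) (C : Chor) (p : Pid) : Prop := ∃ B, BProj D C p B

/-- Prepend a selection of label `l` from `p` to each process in `ps`. -/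
def add_sels (p : Pid) (l : Label) (ps : List Pid) (C : Chor) : Chor :=
  ps.foldr (fun r acc => .seq (.sel p r l) acc) C

open Classical in
/-- The processes of `ps` that need to be informed of the outcome of the conditional. -/
noncomputable def up_list (D : DefSet) (p : Pid) (b : BExpr) (ps : List Pid)
    (C1 C2 : Chor) : List Pid :=
  ps.filter fun r => decide (r ≠ p ∧ ¬ projectable_B D (.cond p b C1 C2) r)

/-- The amendment procedure. -/
noncomputable def amend (D : DefSet) (ps : List Pid) : Chor → Chor
| .seq η C => .seq η (amend D ps C)
| .cond p b C1 C2 =>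
    let A1 := amend D ps C1
    let A2 := amend D ps C2
    let l := up_list D p b ps A1 A2
    .cond p b (add_sels p .left l A1) (add_sels p .right l A2)
| .call X => .call X
| .nil => .nil

/-- Amendment of a set of procedure definitions. -/
noncomputable def amend_D (D : DefSet) (ps : List Pid) : DefSet :=
  fun X => ((D X).1, amend D ps (D X).2)

/-- Memory states. -/
abbrev State := Pid → Var → Val

def updState (s : State) (p : Pid) (x : Var) (v : Val) : State :=
  fun q y => if q = p ∧ y = x then v else s q y

def eval : Expr → State → Pid → Val
| .zero, _, _ => 0
| .var x, s, p => s p x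
| .succ x, s, p => s p x + 1

def beval : BExpr → State → Pid → Bool
| .eq x y, s, p => s p x == s p y

/-- Transition labels. -/
inductive TLabel
| com (p : Pid) (v : Val) (q : Pid)
| sel (p q : Pid) (l : Label)
| tau (p : Pid)
deriving Repr

def tlProcs : TLabel → Finset Pid
| .com p _ q => {p, q}
| .sel p q _ => {p, q}
| .tau p => {p}

/-- Labelled transition semantics of choreographic configurations. -/
inductive Step (D : DefSet) : Chor → State → TLabel → Chor → State → Prop
| com {p e q x C s} :
    Step D (.seq (.com p e q x) C) s (.com p (eval e s p) q) C (updState s q x (eval e s p))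
| sel {p q l C s} : Step D (.seq (.sel p q l) C) s (.sel p q l) C s
| thenB {p b C1 C2 s} : beval b s p = true → Step D (.cond p b C1 C2) s (.tau p) C1 s
| elseB {p b C1 C2 s} : beval b s p = false → Step D (.cond p b C1 C2) s (.tau p) C2 s
| call {X p s} : p ∈ (D X).1 → Step D (.call X) s (.tau p) (D X).2 s
| delayEta {η C s t C' s'} : Disjoint (procsEta η) (tlProcs t) →
    Step D C s t C' s' → Step D (.seq η C) s t (.seq η C') s'
| delayCond {p b C1 C2 s t C1' C2' s'} : p ∉ tlProcs t →
    Step D C1 s t C1' s' → Step D C2 s t C2' s' →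
    Step D (.cond p b C1 C2) s t (.cond p b C1' C2') s'

/-- Reflexive-transitive closure of the transition relation. -/
inductive StepMany (D : DefSet) : Chor → State → List TLabel → Chor → State → Prop
| refl {C s} : StepMany D C s [] C s
| step {C s t C' s' tl C'' s''} : Step D C s t C' s' → StepMany D C' s' tl C'' s'' →
    StepMany D C s (t :: tl) C'' s''

/-- Selection expansion of lists of transition labels. -/
inductive SelExp : List TLabel → List TLabel → Prop
| base {tl tl'} : tl.Perm tl' → SelExp tl tl'
| extra {p q l tl tl' tl''} : SelExp tl tl' → (TLabel.sel p q l :: tl').Perm tl'' →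
    SelExp tl tl''

/-- A configuration is stuck when it admits no transition. -/
def Stuck (D : DefSet) (C : Chor) (s : State) : Prop :=
  ∀ t C' s', ¬ Step D C s t C' s'

/-- Termination: there is no infinite execution from the configuration. -/
def Terminates (D : DefSet) (C : Chor) (s : State) : Prop :=
  ¬ ∃ f : ℕ → Chor × State × TLabel,
      (f 0).1 = C ∧ (f 0).2.1 = s ∧
      ∀ n, Step D (f n).1 (f n).2.1 (f n).2.2 (f (n+1)).1 (f (n+1)).2.1

/-- `(D, C)` implements the partial function `f` with input processes `ps`
(storing the inputs in variable `0`) and output process `q`. -/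
def implements (D : DefSet) (C : Chor) {m : ℕ} (f : (Fin m → ℕ) → Part ℕ)
    (ps : Fin m → Pid) (q : Pid) : Prop :=
  ∀ (s : State) (n : Fin m → ℕ), (∀ i, s (ps i) 0 = n i) →
    (∀ v ∈ f n, Terminates D C s ∧
      ∀ tl C' s', StepMany D C s tl C' s' → Stuck D C' s' → s' q 0 = v) ∧
    (¬ (f n).Dom → ¬ ∃ tl C' s', StepMany D C s tl C' s' ∧ Stuck D C' s')

/-- `ps` covers all processes used by the program `(D, C)`. -/
def CoversProcs (D : DefSet) (C : Chor) (ps : List Pid) : Prop :=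
  (∀ r ∈ procsC C, r ∈ ps) ∧ ∀ X, ∀ r ∈ procsC (D X).2, r ∈ ps

end CC

/-!
Every run can be extended so that some permutation of its labels is the trace of an in-order
run, i.e. one using neither `delayEta` nor `delayCond`: a delayed step involves none of the
processes of the actions it overtakes, so it commutes with them, and the actions it was
delayed under can be executed afterwards. In-order runs are simulated by the amended program
step by step; the only difference is that a conditional is followed by the selections that
amendment inserted, and these only add selection labels.
-/

namespace CC

theorem StepMany.append {D : DefSet} {C s tl C' s' tl' C'' s''}
    (h₁ : StepMany D C s tl C' s') (h₂ : StepMany D C' s' tl' C'' s'') :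
    StepMany D C s (tl ++ tl') C'' s'' := by
  induction h₁ with
  | refl => exact h₂
  | step hst _ ih => exact .step hst (ih h₂)

theorem StepMany.single {D : DefSet} {C s t C' s'} (h : Step D C s t C' s') :
    StepMany D C s [t] C' s' :=
  .step h .refl

theorem StepMany.add_sels (D : DefSet) (p : Pid) (l : Label) (rs : List Pid) (C : Chor)
    (s : State) : StepMany D (add_sels p l rs C) s (rs.map (TLabel.sel p · l)) C s := by
  induction rs with
  | nil => exact .refl
  | cons r rs ih => exact .step .sel ih

theorem eval_congr (e : Expr) {s u : State} {p : Pid} (h : u p = s p) :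
    eval e u p = eval e s p := by
  cases e <;> simp [eval, h]

theorem beval_congr (b : BExpr) {s u : State} {p : Pid} (h : u p = s p) :
    beval b u p = beval b s p := by
  cases b
  simp [beval, h]

theorem updState_apply_of_ne (s : State) {p q : Pid} (h : p ≠ q) (x : Var) (v : Val) :
    updState s q x v p = s p := by
  funext y
  simp [updState, h]

theorem updState_comm (s : State) {q q' : Pid} (h : q ≠ q') (x x' : Var) (v v' : Val) :
    updState (updState s q x v) q' x' v' = updState (updState s q' x' v') q x v := by
  funext r y
  simp only [updState]
  grind

namespace Step

variable {D : DefSet} {C C' : Chor} {s s' : State} {t : TLabel}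

theorem apply_of_not_mem (h : Step D C s t C' s') {r : Pid} (hr : r ∉ tlProcs t) :
    s' r = s r := by
  induction h with
  | com =>
    simp only [tlProcs, Finset.mem_insert, Finset.mem_singleton, not_or] at hr
    exact updState_apply_of_ne _ hr.2 _ _
  | delayEta _ _ ih => exact ih hr
  | delayCond _ _ _ ih _ => exact ih hr
  | _ => rfl

theorem updState_of_not_mem (h : Step D C s t C' s') {q : Pid} (hq : q ∉ tlProcs t)
    (x : Var) (v : Val) : Step D C (updState s q x v) t C' (updState s' q x v) := by
  induction h with
  | @com p e q' x' C s =>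
    simp only [tlProcs, Finset.mem_insert, Finset.mem_singleton, not_or] at hq
    have he : eval e (updState s q x v) p = eval e s p :=
      eval_congr e (updState_apply_of_ne s (Ne.symm hq.1) x v)
    rw [updState_comm s (Ne.symm hq.2), ← he]
    exact .com
  | sel => exact .sel
  | thenB hb =>
    simp only [tlProcs, Finset.mem_singleton] at hq
    exact .thenB (by rwa [beval_congr _ (updState_apply_of_ne _ (Ne.symm hq) _ _)])
  | elseB hb =>
    simp only [tlProcs, Finset.mem_singleton] at hq
    exact .elseB (by rwa [beval_congr _ (updState_apply_of_ne _ (Ne.symm hq) _ _)])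
  | call hp => exact .call hp
  | delayEta hdisj _ ih => exact .delayEta hdisj (ih hq)
  | delayCond hp _ _ ih₁ ih₂ => exact .delayCond hp (ih₁ hq) (ih₂ hq)

end Step

inductive InOrder (D : DefSet) : Chor → State → List TLabel → Chor → State → Prop
| refl {C s} : InOrder D C s [] C s
| com {p e q x C s tl C' s'} :
    InOrder D C (updState s q x (eval e s p)) tl C' s' →
    InOrder D (.seq (.com p e q x) C) s (.com p (eval e s p) q :: tl) C' s'
| sel {p q l C s tl C' s'} : InOrder D C s tl C' s' →
    InOrder D (.seq (.sel p q l) C) s (.sel p q l :: tl) C' s'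
| thenB {p b C1 C2 s tl C' s'} : beval b s p = true → InOrder D C1 s tl C' s' →
    InOrder D (.cond p b C1 C2) s (.tau p :: tl) C' s'
| elseB {p b C1 C2 s tl C' s'} : beval b s p = false → InOrder D C2 s tl C' s' →
    InOrder D (.cond p b C1 C2) s (.tau p :: tl) C' s'
| call {X p s tl C' s'} : p ∈ (D X).1 → InOrder D (D X).2 s tl C' s' →
    InOrder D (.call X) s (.tau p :: tl) C' s'

def HasInOrderCompletion (D : DefSet) (C : Chor) (s : State) (tl : List TLabel) (C' : Chor)
    (s' : State) : Prop :=
  ∃ tl' C'' s'' tlS, StepMany D C' s' tl' C'' s'' ∧ InOrder D C s tlS C'' s'' ∧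
    tlS.Perm (tl ++ tl')

namespace HasInOrderCompletion

variable {D : DefSet} {C C' C₀ C'' : Chor} {s s' s₀ s'' : State} {tl : List TLabel}

theorem of_inOrder (h : InOrder D C s tl C' s') : HasInOrderCompletion D C s tl C' s' :=
  ⟨[], C', s', tl, .refl, h, by simp⟩

theorem perm {tl₂ : List TLabel} (htl : tl.Perm tl₂) (h : HasInOrderCompletion D C s tl C' s') :
    HasInOrderCompletion D C s tl₂ C' s' := by
  obtain ⟨tl', C'', s'', tlS, hrun, hio, hperm⟩ := h
  exact ⟨tl', C'', s'', tlS, hrun, hio, hperm.trans (htl.append_right tl')⟩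

theorem of_stepMany {tl₀ : List TLabel}
    (h : HasInOrderCompletion D C s (tl ++ tl₀) C'' s'') (hrun : StepMany D C' s' tl₀ C'' s'') :
    HasInOrderCompletion D C s tl C' s' := by
  obtain ⟨tl', C₃, s₃, tlS, hrun', hio, hperm⟩ := h
  exact ⟨tl₀ ++ tl', C₃, s₃, tlS, hrun.append hrun', hio, by simpa using hperm⟩

theorem cons_swap {a t : TLabel}
    (hfirst : ∀ {tl C' s'}, InOrder D C₀ s₀ tl C' s' → InOrder D C s (a :: tl) C' s')
    (h : HasInOrderCompletion D C₀ s₀ (t :: tl) C' s') :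
    HasInOrderCompletion D C s (t :: a :: tl) C' s' := by
  obtain ⟨tl', C'', s'', tlS, hrun, hio, hperm⟩ := h
  exact ⟨tl', C'', s'', a :: tlS, hrun, hfirst hio, (hperm.cons a).trans (.swap t a _)⟩

end HasInOrderCompletion

open HasInOrderCompletion in
theorem Step.hasInOrderCompletion_of_inOrder {D : DefSet} {C : Chor} :
    ∀ {s t C₁ s₁ tl C' s'}, Step D C s t C₁ s₁ → InOrder D C₁ s₁ tl C' s' →
      HasInOrderCompletion D C s (t :: tl) C' s' := by
  induction C with
  | seq η C₀ ih =>
    intro s t C₁ s₁ tl C' s' hstep hio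
    cases hstep with
    | com => exact of_inOrder (.com hio)
    | sel => exact of_inOrder (.sel hio)
    | delayEta hdisj hsub =>
      cases η with
      | com p e q x =>
        have hp : p ∉ tlProcs t := Finset.disjoint_left.1 hdisj (by simp [procsEta])
        have hq : q ∉ tlProcs t := Finset.disjoint_left.1 hdisj (by simp [procsEta])
        have hev : eval e s₁ p = eval e s p := eval_congr e (hsub.apply_of_not_mem hp)
        have hsub' := hsub.updState_of_not_mem hq x (eval e s p)
        cases hio with
        | refl => exact of_stepMany (cons_swap .com (ih hsub' .refl)) (.single (hev ▸ .com))
        | com hrest => rw [hev] at hrest ⊢; exact cons_swap .com (ih hsub' hrest)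
      | sel p q l =>
        cases hio with
        | refl => exact of_stepMany (cons_swap .sel (ih hsub .refl)) (.single .sel)
        | sel hrest => exact cons_swap .sel (ih hsub hrest)
  | cond p b C₁ C₂ ih₁ ih₂ =>
    intro s t Cr s₁ tl C' s' hstep hio
    cases hstep with
    | thenB hb => exact of_inOrder (.thenB hb hio)
    | elseB hb => exact of_inOrder (.elseB hb hio)
    | delayCond hp hsub₁ hsub₂ =>
      have hbe : beval b s₁ p = beval b s p := beval_congr b (hsub₁.apply_of_not_mem hp)
      cases hio with
      | refl =>
        cases hb : beval b s p with
        | true =>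
          exact of_stepMany (cons_swap (.thenB hb) (ih₁ hsub₁ .refl))
            (.single (.thenB (hbe.trans hb)))
        | false =>
          exact of_stepMany (cons_swap (.elseB hb) (ih₂ hsub₂ .refl))
            (.single (.elseB (hbe.trans hb)))
      | thenB hb hrest => exact cons_swap (.thenB (hbe.symm.trans hb)) (ih₁ hsub₁ hrest)
      | elseB hb hrest => exact cons_swap (.elseB (hbe.symm.trans hb)) (ih₂ hsub₂ hrest)
  | call X =>
    intro s t C₁ s₁ tl C' s' hstep hio
    cases hstep with
    | call hp => exact of_inOrder (.call hp hio)
  | nil =>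
    intro s t C₁ s₁ tl C' s' hstep
    cases hstep

theorem StepMany.hasInOrderCompletion {D : DefSet} {C s tl C' s'}
    (h : StepMany D C s tl C' s') : HasInOrderCompletion D C s tl C' s' := by
  induction h with
  | refl => exact .of_inOrder .refl
  | step hst _ ih =>
    obtain ⟨tl', C'', s'', tlS, hrun, hio, hperm⟩ := ih
    exact .of_stepMany ((hst.hasInOrderCompletion_of_inOrder hio).perm (hperm.cons _)) hrun

namespace SelExp

theorem refl (tl : List TLabel) : SelExp tl tl :=
  .base (.refl tl)

theorem cons {tl tl' : List TLabel} (t : TLabel) (h : SelExp tl tl') :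
    SelExp (t :: tl) (t :: tl') := by
  induction h with
  | base hp => exact .base (hp.cons t)
  | extra _ hp ih => exact .extra ih ((List.Perm.swap ..).trans (hp.cons t))

theorem perm_left {tl₀ tl tl' : List TLabel} (hperm : tl₀.Perm tl) (h : SelExp tl tl') :
    SelExp tl₀ tl' := by
  induction h with
  | base hp => exact .base (hperm.trans hp)
  | extra _ hp ih => exact .extra (ih hperm) hp

theorem sels_append {tl tl' : List TLabel} (h : SelExp tl tl') (p : Pid) (l : Label)
    (rs : List Pid) : SelExp tl (rs.map (TLabel.sel p · l) ++ tl') := by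
  induction rs with
  | nil => exact h
  | cons r rs ih => exact .extra ih (.refl _)

end SelExp

theorem InOrder.amend_stepMany {D : DefSet} (ps : List Pid) {C s tl C' s'}
    (h : InOrder D C s tl C' s') :
    ∃ tlA, SelExp tl tlA ∧ StepMany (amend_D D ps) (amend D ps C) s tlA (amend D ps C') s' := by
  induction h with
  | refl => exact ⟨[], .refl _, .refl⟩
  | com _ ih =>
    obtain ⟨tlA, hsel, hrun⟩ := ih
    exact ⟨_, hsel.cons _, .step .com hrun⟩
  | sel _ ih =>
    obtain ⟨tlA, hsel, hrun⟩ := ih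
    exact ⟨_, hsel.cons _, .step .sel hrun⟩
  | @thenB p _ _ _ _ _ _ _ hb _ ih =>
    obtain ⟨tlA, hsel, hrun⟩ := ih
    exact ⟨_, (hsel.sels_append p .left _).cons _,
      .step (.thenB hb) ((StepMany.add_sels ..).append hrun)⟩
  | @elseB p _ _ _ _ _ _ _ hb _ ih =>
    obtain ⟨tlA, hsel, hrun⟩ := ih
    exact ⟨_, (hsel.sels_append p .right _).cons _,
      .step (.elseB hb) ((StepMany.add_sels ..).append hrun)⟩
  | call hp _ ih =>
    obtain ⟨tlA, hsel, hrun⟩ := ih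
    exact ⟨_, hsel.cons _, .step (.call hp) hrun⟩

end CC

open CC in
theorem amend_complete_many (D : CC.DefSet) (C : CC.Chor) (ps : List CC.Pid)
    (s : CC.State) (tl : List CC.TLabel) (C' : CC.Chor) (s' : CC.State)
    (hWF : Program_WF D C) (h : StepMany D C s tl C' s') :
    ∃ (tl' tl'' : List CC.TLabel) (C'' : CC.Chor) (s'' : CC.State),
      SelExp (tl ++ tl') tl'' ∧
      StepMany D C' s' tl' C'' s'' ∧
      StepMany (amend_D D ps) (amend D ps C) s tl'' (amend D ps C'') s'' := by
  obtain ⟨tl', C'', s'', tlS, hrun, hio, hperm⟩ := h.hasInOrderCompletion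
  obtain ⟨tlA, hsel, hamend⟩ := hio.amend_stepMany ps
  exact ⟨tl', tlA, C'', s'', hsel.perm_left hperm.symm, hrun, hamend⟩
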